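/- In the nested sequent calculus for GL, the box rule is height-preserving invertible: if Γ{□A} has a cut-free derivation of height h, then Γ{[◇A⊥, A]} has a cut-free derivation of height at most h. -/
import Mathlib


/-- Formulas of GL in negation normal form. -/
inductive Formula : Type where
  | pos : ℕ → Formula
  | neg : ℕ → Formula
  | and : Formula → Formula → Formula
  | or  : Formula → Formula → Formula
  | box : Formula → Formula
  | dia : Formula → Formula
deriving DecidableEq

/-- Negation `A⊥` of a formula, via De Morgan duality. -/
def Formula.negate : Formula → Formula
  | .pos a => .neg a
  | .neg a => .pos a
  | .and A B => .or A.negate B.negate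
  | .or A B => .and A.negate B.negate
  | .box A => .dia A.negate
  | .dia A => .box A.negate

/-- An element of a nested sequent: a formula or a nested (bracketed) sequent. -/
inductive SeqElem : Type where
  | fml : Formula → SeqElem
  | nest : List SeqElem → SeqElem

/-- A nested sequent. -/
abbrev Sequent := List SeqElem

/-- Unary contexts: a nested sequent with a single hole. -/
inductive Ctx : Type where
  | hole : Sequent → Ctx
  | nest : Sequent → Ctx → Ctx

/-- Fill the hole of a context with a sequent. -/
def Ctx.fill : Ctx → Sequent → Sequent
  | .hole Δ, Γ => Δ ++ Γ
  | .nest Δ c, Γ => .nest (c.fill Γ) :: Δ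

/-- Depth of a context: number of brackets surrounding the hole. -/
def Ctx.depth : Ctx → ℕ
  | .hole _ => 0
  | .nest _ c => c.depth + 1

/-- Equivalence of nested sequents up to (deep) exchange. -/
inductive SeqEquiv : Sequent → Sequent → Prop where
  | nil : SeqEquiv [] []
  | cons {e : SeqElem} {Γ Δ : Sequent} : SeqEquiv Γ Δ → SeqEquiv (e :: Γ) (e :: Δ)
  | consNest {Γ' Δ' Γ Δ : Sequent} :
      SeqEquiv Γ' Δ' → SeqEquiv Γ Δ → SeqEquiv (.nest Γ' :: Γ) (.nest Δ' :: Δ)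
  | swap (a b : SeqElem) (Γ : Sequent) : SeqEquiv (a :: b :: Γ) (b :: a :: Γ)
  | trans {Γ Δ Θ : Sequent} : SeqEquiv Γ Δ → SeqEquiv Δ Θ → SeqEquiv Γ Θ

/-- `DerivH n Γ`: `Γ` has a cut-free derivation of height at most `n`. -/
inductive DerivH : ℕ → Sequent → Prop where
  | id (n : ℕ) (c : Ctx) (a : ℕ) :
      DerivH n (c.fill [.fml (.pos a), .fml (.neg a)])
  | and {n : ℕ} {c : Ctx} {A B : Formula} :
      DerivH n (c.fill [.fml A]) → DerivH n (c.fill [.fml B]) →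
      DerivH (n + 1) (c.fill [.fml (.and A B)])
  | or {n : ℕ} {c : Ctx} {A B : Formula} :
      DerivH n (c.fill [.fml A, .fml B]) →
      DerivH (n + 1) (c.fill [.fml (.or A B)])
  | box {n : ℕ} {c : Ctx} {A : Formula} :
      DerivH n (c.fill [.nest [.fml (.dia A.negate), .fml A]]) →
      DerivH (n + 1) (c.fill [.fml (.box A)])
  | dia {n : ℕ} (c d : Ctx) {A : Formula} :
      0 < d.depth →
      DerivH n (c.fill (d.fill [.fml A] ++ [.fml (.dia A)])) →
      DerivH (n + 1) (c.fill (d.fill [] ++ [.fml (.dia A)]))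
  | exch {n : ℕ} {Γ Δ : Sequent} : SeqEquiv Γ Δ → DerivH n Γ → DerivH n Δ
  | up {n : ℕ} {Γ : Sequent} : DerivH n Γ → DerivH (n + 1) Γ

/-- Derivability where cut is permitted on formulas satisfying `P`. -/
inductive DerivWith (P : Formula → Prop) : Sequent → Prop where
  | id (c : Ctx) (a : ℕ) :
      DerivWith P (c.fill [.fml (.pos a), .fml (.neg a)])
  | and {c : Ctx} {A B : Formula} :
      DerivWith P (c.fill [.fml A]) → DerivWith P (c.fill [.fml B]) →
      DerivWith P (c.fill [.fml (.and A B)])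
  | or {c : Ctx} {A B : Formula} :
      DerivWith P (c.fill [.fml A, .fml B]) →
      DerivWith P (c.fill [.fml (.or A B)])
  | box {c : Ctx} {A : Formula} :
      DerivWith P (c.fill [.nest [.fml (.dia A.negate), .fml A]]) →
      DerivWith P (c.fill [.fml (.box A)])
  | dia (c d : Ctx) {A : Formula} :
      0 < d.depth →
      DerivWith P (c.fill (d.fill [.fml A] ++ [.fml (.dia A)])) →
      DerivWith P (c.fill (d.fill [] ++ [.fml (.dia A)]))
  | cut {c : Ctx} {A : Formula} : P A →
      DerivWith P (c.fill [.fml A]) → DerivWith P (c.fill [.fml A.negate]) →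
      DerivWith P (c.fill [])
  | exch {Γ Δ : Sequent} : SeqEquiv Γ Δ → DerivWith P Γ → DerivWith P Δ

/-- Cut-free derivability. -/
abbrev Deriv : Sequent → Prop := DerivWith (fun _ => False)

/-- One occurrence of `□A` replaced by `[◇A⊥, A]`. -/
inductive Repl (A : Formula) : Sequent → Sequent → Prop where
  | head {Γ : Sequent} :
      Repl A (.fml (.box A) :: Γ) (.nest [.fml (.dia A.negate), .fml A] :: Γ)
  | cons {e : SeqElem} {Γ Δ : Sequent} : Repl A Γ Δ → Repl A (e :: Γ) (e :: Δ)
  | nest {Γ' Δ' Γ : Sequent} : Repl A Γ' Δ' → Repl A (.nest Γ' :: Γ) (.nest Δ' :: Γ)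

lemma seqEquiv_refl (Γ : Sequent) : SeqEquiv Γ Γ := by
  induction Γ with
  | nil => exact SeqEquiv.nil
  | cons e Γ ih => exact SeqEquiv.cons ih

lemma repl_append_right {A : Formula} {Γ Δ : Sequent} (h : Repl A Γ Δ) (E : Sequent) :
    Repl A (Γ ++ E) (Δ ++ E) := by
  induction h with
  | head => exact Repl.head
  | cons _ ih => exact Repl.cons ih
  | nest h => exact Repl.nest h

lemma repl_append_left {A : Formula} (Θ : Sequent) {Γ Δ : Sequent} (h : Repl A Γ Δ) :
    Repl A (Θ ++ Γ) (Θ ++ Δ) := by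
  induction Θ with
  | nil => exact h
  | cons e Θ ih => exact Repl.cons ih

lemma repl_fill {A : Formula} (c : Ctx) {Γ Δ : Sequent} (h : Repl A Γ Δ) :
    Repl A (c.fill Γ) (c.fill Δ) := by
  induction c with
  | hole Θ => exact repl_append_left Θ h
  | nest Θ c ih => exact Repl.nest ih

lemma repl_append_split {A : Formula} :
    ∀ (Θ : Sequent) {E Δ : Sequent}, Repl A (Θ ++ E) Δ →
      (∃ Θ', (∀ F, Repl A (Θ ++ F) (Θ' ++ F)) ∧ Δ = Θ' ++ E) ∨
      (∃ E', Repl A E E' ∧ Δ = Θ ++ E') := by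
  intro Θ
  induction Θ with
  | nil => intro E Δ h; exact Or.inr ⟨Δ, h, rfl⟩
  | cons e Θ ih =>
    intro E Δ h
    cases h with
    | head =>
      exact Or.inl ⟨.nest [.fml (.dia A.negate), .fml A] :: Θ,
        fun F => Repl.head, rfl⟩
    | cons h' =>
      rcases ih h' with ⟨Θ', hΘ, rfl⟩ | ⟨E', hE, rfl⟩
      · exact Or.inl ⟨e :: Θ', fun F => Repl.cons (hΘ F), rfl⟩
      · exact Or.inr ⟨E', hE, rfl⟩
    | nest h' =>
      exact Or.inl ⟨_ :: Θ, fun F => Repl.nest h', rfl⟩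

lemma repl_fill_split {A : Formula} :
    ∀ (c : Ctx) {E Δ : Sequent}, Repl A (c.fill E) Δ →
      (∃ c' : Ctx, c'.depth = c.depth ∧ (∀ F, Repl A (c.fill F) (c'.fill F)) ∧
        Δ = c'.fill E) ∨
      (∃ E', Repl A E E' ∧ Δ = c.fill E') := by
  intro c
  induction c with
  | hole Θ =>
    intro E Δ h
    rcases repl_append_split Θ h with ⟨Θ', hΘ, rfl⟩ | ⟨E', hE, rfl⟩
    · exact Or.inl ⟨.hole Θ', rfl, hΘ, rfl⟩
    · exact Or.inr ⟨E', hE, rfl⟩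
  | nest Θ c ih =>
    intro E Δ h
    cases h with
    | @cons _ _ Δ₀ h' =>
      exact Or.inl ⟨.nest Δ₀ c, rfl, fun F => Repl.cons h', rfl⟩
    | nest h' =>
      rcases ih h' with ⟨c', hdep, hc, rfl⟩ | ⟨E', hE, rfl⟩
      · exact Or.inl ⟨.nest Θ c', by simp [Ctx.depth, hdep], fun F => Repl.nest (hc F), rfl⟩
      · exact Or.inr ⟨E', hE, rfl⟩

lemma repl_equiv {A : Formula} {Γ Δ : Sequent} (he : SeqEquiv Γ Δ) :
    ∀ {Θ : Sequent}, Repl A Δ Θ → ∃ Γ₁, Repl A Γ Γ₁ ∧ SeqEquiv Γ₁ Θ := by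
  induction he with
  | nil => intro Θ h; cases h
  | @cons e Γ Δ h ih =>
    intro Θ hr
    cases hr with
    | head => exact ⟨_, Repl.head, SeqEquiv.cons h⟩
    | cons hr' =>
      obtain ⟨Γ₁, h1, h2⟩ := ih hr'
      exact ⟨e :: Γ₁, Repl.cons h1, SeqEquiv.cons h2⟩
    | nest hr' =>
      exact ⟨.nest _ :: Γ, Repl.nest hr', SeqEquiv.consNest (seqEquiv_refl _) h⟩
  | @consNest Γ' Δ' Γ Δ h1 h2 ih1 ih2 =>
    intro Θ hr
    cases hr with
    | cons hr' =>
      obtain ⟨Γ₁, ha, hb⟩ := ih2 hr'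
      exact ⟨.nest Γ' :: Γ₁, Repl.cons ha, SeqEquiv.consNest h1 hb⟩
    | nest hr' =>
      obtain ⟨Γ₁, ha, hb⟩ := ih1 hr'
      exact ⟨.nest Γ₁ :: Γ, Repl.nest ha, SeqEquiv.consNest hb h2⟩
  | swap a b Γ =>
    intro Θ hr
    cases hr with
    | head =>
      exact ⟨a :: _ :: Γ, Repl.cons Repl.head, SeqEquiv.swap _ _ _⟩
    | cons hr' =>
      cases hr' with
      | head => exact ⟨_ :: b :: Γ, Repl.head, SeqEquiv.swap _ _ _⟩
      | cons hr'' =>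
        exact ⟨a :: b :: _, Repl.cons (Repl.cons hr''), SeqEquiv.swap _ _ _⟩
      | nest hr'' =>
        exact ⟨.nest _ :: b :: Γ, Repl.nest hr'', SeqEquiv.swap _ _ _⟩
    | nest hr' =>
      exact ⟨a :: .nest _ :: Γ, Repl.cons (Repl.nest hr'), SeqEquiv.swap _ _ _⟩
  | trans h1 h2 ih1 ih2 =>
    intro Θ hr
    obtain ⟨Γ₂, ha, hb⟩ := ih2 hr
    obtain ⟨Γ₁, hc, hd⟩ := ih1 ha
    exact ⟨Γ₁, hc, SeqEquiv.trans hd hb⟩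

lemma repl_main {A : Formula} :
    ∀ {n : ℕ} {Γ : Sequent}, DerivH n Γ → ∀ {Δ : Sequent}, Repl A Γ Δ → DerivH n Δ := by
  intro n Γ hd
  induction hd with
  | id n c a =>
    intro Δ h
    rcases repl_fill_split c h with ⟨c', _, _, rfl⟩ | ⟨E', hE, rfl⟩
    · exact DerivH.id n c' a
    · cases hE with
      | cons h' => cases h' with | cons h'' => cases h''
  | @and n c B C h1 h2 ih1 ih2 =>
    intro Δ h
    rcases repl_fill_split c h with ⟨c', _, hc, rfl⟩ | ⟨E', hE, rfl⟩
    · exact DerivH.and (ih1 (hc _)) (ih2 (hc _))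
    · cases hE with | cons h' => cases h'
  | @or n c B C h1 ih1 =>
    intro Δ h
    rcases repl_fill_split c h with ⟨c', _, hc, rfl⟩ | ⟨E', hE, rfl⟩
    · exact DerivH.or (ih1 (hc _))
    · cases hE with | cons h' => cases h'
  | @box n c B h1 ih1 =>
    intro Δ h
    rcases repl_fill_split c h with ⟨c', _, hc, rfl⟩ | ⟨E', hE, rfl⟩
    · exact DerivH.box (ih1 (hc _))
    · cases hE with
      | head => exact DerivH.up h1
      | cons h' => cases h'
  | @dia n c d B hdep h1 ih1 =>
    intro Δ h
    rcases repl_fill_split c h with ⟨c', _, hc, rfl⟩ | ⟨E', hE, rfl⟩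
    · exact DerivH.dia c' d hdep (ih1 (hc _))
    · rcases repl_append_split (d.fill []) hE with ⟨Θ', hΘ, rfl⟩ | ⟨E'', hE', rfl⟩
      · have h0 : Repl A (d.fill []) Θ' := by
          have := hΘ []
          simpa using this
        rcases repl_fill_split d h0 with ⟨d', hdep', hd', rfl⟩ | ⟨E'', hE'', _⟩
        · refine DerivH.dia c d' (hdep' ▸ hdep) (ih1 ?_)
          exact repl_fill c (repl_append_right (hd' [.fml B]) _)
        · cases hE''
      · cases hE' with | cons h' => cases h'
  | exch he h1 ih1 =>
    intro Δ h
    obtain ⟨Γ₁, ha, hb⟩ := repl_equiv he h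
    exact DerivH.exch hb (ih1 ha)
  | up h1 ih1 =>
    intro Δ h
    exact DerivH.up (ih1 h)

/-- the box rule is height-preserving invertible. -/
theorem box_inversion (h : ℕ) (c : Ctx) (A : Formula)
    (hd : DerivH h (c.fill [.fml (.box A)])) :
    DerivH h (c.fill [.nest [.fml (.dia A.negate), .fml A]]) :=
  repl_main hd (repl_fill c Repl.head)
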